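/- Let X be a directed graph and I the directed graph with vertices {−1, 0, +1} and edges −1→0 and +1→0. Let CX be obtained from X □ I by collapsing the induced subgraph X □ {+1} to a single vertex. Then the inclusion X ≅ X □ {−1} ↪ CX is a cofibration of directed graphs. -/

import Mathlib

open scoped Classical

/-- A directed graph on a vertex type `V` (loops allowed, no parallel edges). -/
structure DGraph (V : Type) where
  Adj : V → V → Prop

namespace DGraph
variable {V W : Type}

/-- There is a directed path of length `n` (i.e. with `n` edges) from `x` to `y`. -/
def PathLen (G : DGraph V) (x y : V) (n : ℕ) : Prop :=
  ∃ f : ℕ → V, f 0 = x ∧ f n = y ∧ ∀ i < n, G.Adj (f i) (f (i + 1))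

/-- The shortest path metric, with values in `ℕ∞ = ℕ ∪ {∞}`. -/
noncomputable def edist (G : DGraph V) (x y : V) : ℕ∞ :=
  sInf {n : ℕ∞ | ∃ m : ℕ, n = m ∧ G.PathLen x y m}

/-- The length of a tuple of vertices: the sum of consecutive distances. -/
noncomputable def tlen (G : DGraph V) {k : ℕ} (f : Fin (k + 1) → V) : ℕ∞ :=
  ∑ i : Fin k, G.edist (f i.castSucc) (f i.succ)

/-- The box product of directed graphs. -/
def box (G : DGraph V) (H : DGraph W) : DGraph (V × W) where
  Adj p q := (p.1 = q.1 ∧ H.Adj p.2 q.2) ∨ (p.2 = q.2 ∧ G.Adj p.1 q.1)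

/-- The strong product of directed graphs. -/
def strong (G : DGraph V) (H : DGraph W) : DGraph (V × W) where
  Adj p q := (p.1 = q.1 ∧ H.Adj p.2 q.2) ∨ (p.2 = q.2 ∧ G.Adj p.1 q.1) ∨
    (G.Adj p.1 q.1 ∧ H.Adj p.2 q.2)

end DGraph

namespace DGraph
variable {V : Type}
/-- `y` is reachable from `x` by a directed path. -/
def Reaches (G : DGraph V) (x y : V) : Prop := Relation.ReflTransGen G.Adj x y
end DGraph

/-- `A ⊆ V`, with projection `π`, is a cofibration in `G`: an induced subgraph inclusion
with no edges from outside `A` into `A`, such that every vertex `x` in the reach of `A`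
has a projection `π x ∈ A` with `d(a,x) = d(a,π x) + d(π x,x)` for all `a ∈ A`. -/
def IsCofib {V : Type} (G : DGraph V) (A : Set V) (π : V → V) : Prop :=
  (∀ u v : V, u ∉ A → v ∈ A → ¬ G.Adj u v) ∧
  (∀ x : V, (∃ a ∈ A, G.Reaches a x) →
    π x ∈ A ∧ ∀ a ∈ A, G.edist a x = G.edist a (π x) + G.edist (π x) x)

namespace DGraph
variable {V : Type}

/-- The cone `CX` on a directed graph `X`: the quotient of the box product `X □ I`
(where `I` is `−1 → 0 ← +1`) collapsing `X □ {+1}` to a single vertex.  Vertices: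
`some (x, false)` is `(x, −1)`, `some (x, true)` is `(x, 0)`, and `none` is the cone
point `+1`. -/
def Cone (G : DGraph V) : DGraph (Option (V × Bool)) where
  Adj u v :=
    match u, v with
    | some (x, b₁), some (y, b₂) =>
        (b₁ = b₂ ∧ G.Adj x y) ∨ (b₁ = false ∧ b₂ = true ∧ x = y)
    | none, some (_, b₂) => b₂ = true
    | none, none => ∃ x y : V, G.Adj x y
    | some _, none => False

end DGraph

/-!
Nothing leaves the cone point towards level −1 or 0, so the reach of `X □ {−1}` is
`X □ {−1, 0}`, and `π` projects `(y, 0)` to `(y, −1)`. No edge goes down from level 0 to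
level −1, so a path from `(z, −1)` to `(y, 0)` climbs exactly once, along a vertical edge,
and then runs along edges of `X`; shifting that tail down to level −1 gives a path to
`(y, −1)` shorter by one. Hence `d((z, −1), (y, 0)) = d((z, −1), (y, −1)) + 1`, which is
the cofibration identity.
-/

namespace DGraph
variable {V : Type} {G : DGraph V} {x y z : V} {m n : ℕ}

theorem pathLen_zero_iff : G.PathLen x y 0 ↔ x = y := by
  constructor
  · rintro ⟨f, rfl, rfl, -⟩
    rfl
  · rintro rfl
    exact ⟨fun _ => x, rfl, rfl, fun _ h => absurd h (Nat.not_lt_zero _)⟩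

theorem PathLen.snoc (h : G.PathLen x y n) (e : G.Adj y z) : G.PathLen x z (n + 1) := by
  obtain ⟨f, h0, hn, hadj⟩ := h
  refine ⟨fun i => if i ≤ n then f i else z, by simpa using h0, by simp, fun i hi => ?_⟩
  rcases Nat.lt_or_eq_of_le (Nat.lt_succ_iff.1 hi) with hi' | rfl
  · simpa [hi'.le, Nat.succ_le_of_lt hi'] using hadj i hi'
  · simpa [hn] using e

theorem pathLen_succ_iff : G.PathLen x z (n + 1) ↔ ∃ y, G.PathLen x y n ∧ G.Adj y z := by
  constructor
  · rintro ⟨f, h0, hn, hadj⟩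
    exact ⟨f n, ⟨f, h0, rfl, fun i hi => hadj i (by omega)⟩, hn ▸ hadj n (by omega)⟩
  · rintro ⟨y, h, e⟩
    exact h.snoc e

theorem PathLen.reaches (h : G.PathLen x y n) : G.Reaches x y := by
  induction n generalizing y with
  | zero => exact pathLen_zero_iff.1 h ▸ Relation.ReflTransGen.refl
  | succ n ih =>
    obtain ⟨w, hw, e⟩ := pathLen_succ_iff.1 h
    exact (ih hw).tail e

theorem edist_le_of_pathLen (h : G.PathLen x y n) : G.edist x y ≤ n :=
  sInf_le ⟨n, rfl, h⟩

theorem le_edist_of_forall_pathLen {k : ℕ∞} (h : ∀ m, G.PathLen x y m → k ≤ m) :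
    k ≤ G.edist x y :=
  le_sInf fun _ ⟨m, hm, hp⟩ => hm ▸ h m hp

theorem edist_self (x : V) : G.edist x x = 0 :=
  nonpos_iff_eq_zero.1 (by simpa using edist_le_of_pathLen (pathLen_zero_iff.2 (rfl : x = x)))

theorem exists_pathLen_of_edist_ne_top (h : G.edist x y ≠ ⊤) :
    ∃ m : ℕ, G.edist x y = m ∧ G.PathLen x y m := by
  have hne : {n : ℕ∞ | ∃ m : ℕ, n = m ∧ G.PathLen x y m}.Nonempty := by
    by_contra hempty
    exact h (by rw [edist, Set.not_nonempty_iff_eq_empty.1 hempty, sInf_empty])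
  exact csInf_mem hne

theorem edist_le_edist_add_one (e : G.Adj y z) : G.edist x z ≤ G.edist x y + 1 := by
  by_cases h : G.edist x y = ⊤
  · simp [h]
  obtain ⟨m, hm, hp⟩ := exists_pathLen_of_edist_ne_top h
  rw [hm]
  exact_mod_cast edist_le_of_pathLen (hp.snoc e)

namespace Cone

@[simp]
theorem adj_false_false : G.Cone.Adj (some (x, false)) (some (y, false)) ↔ G.Adj x y := by
  simp [Cone]

@[simp]
theorem adj_false_true : G.Cone.Adj (some (x, false)) (some (y, true)) ↔ x = y := by
  simp [Cone]

@[simp]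
theorem adj_true_true : G.Cone.Adj (some (x, true)) (some (y, true)) ↔ G.Adj x y := by
  simp [Cone]

theorem exists_eq_of_adj_false {u : Option (V × Bool)}
    (h : G.Cone.Adj u (some (y, false))) : ∃ x, u = some (x, false) := by
  rcases u with _ | ⟨x, _ | _⟩ <;> simp_all [Cone]

theorem exists_eq_of_reaches {p : V × Bool} {w : Option (V × Bool)}
    (h : G.Cone.Reaches (some p) w) : ∃ q, w = some q := by
  induction h with
  | refl => exact ⟨p, rfl⟩
  | @tail _ w _ e ih =>
    obtain ⟨q, rfl⟩ := ih
    rcases w with _ | r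
    · simp [Cone] at e
    · exact ⟨r, rfl⟩

theorem edist_add_one_le_of_pathLen_true
    (h : G.Cone.PathLen (some (z, false)) (some (y, true)) m) :
    G.Cone.edist (some (z, false)) (some (y, false)) + 1 ≤ m := by
  induction m generalizing y with
  | zero => simp [pathLen_zero_iff] at h
  | succ m ih =>
    obtain ⟨w, hw, e⟩ := pathLen_succ_iff.1 h
    obtain ⟨⟨x, _ | _⟩, rfl⟩ := exists_eq_of_reaches hw.reaches
    · obtain rfl : x = y := adj_false_true.1 e
      push_cast
      gcongr
      exact edist_le_of_pathLen hw
    · calc G.Cone.edist (some (z, false)) (some (y, false)) + 1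
          ≤ G.Cone.edist (some (z, false)) (some (x, false)) + 1 + 1 := by
            gcongr
            exact edist_le_edist_add_one (adj_false_false.2 (adj_true_true.1 e))
        _ ≤ ↑(m + 1) := by push_cast; gcongr; exact ih hw

theorem edist_true (z y : V) :
    G.Cone.edist (some (z, false)) (some (y, true)) =
      G.Cone.edist (some (z, false)) (some (y, false)) + 1 :=
  le_antisymm (edist_le_edist_add_one (adj_false_true.2 rfl))
    (le_edist_of_forall_pathLen fun _ => edist_add_one_le_of_pathLen_true)

theorem edist_eq_edist_false_add (z y : V) (b : Bool) :
    G.Cone.edist (some (z, false)) (some (y, b)) =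
      G.Cone.edist (some (z, false)) (some (y, false)) +
        G.Cone.edist (some (y, false)) (some (y, b)) := by
  cases b
  · rw [edist_self, add_zero]
  · rw [edist_true, edist_true, edist_self, zero_add]

end Cone
end DGraph

/-- the inclusion `X ≅ X □ {−1} ↪ CX` is a cofibration of directed
graphs. -/
theorem cone_inclusion_cofibration {V : Type} (G : DGraph V) :
    -- the inclusion `x ↦ (x, −1)` identifies `X` with an induced subgraph of `CX`:
    (∀ x y : V, G.Adj x y ↔
      (G.Cone).Adj (some (x, false)) (some (y, false))) ∧
    -- and it is a cofibration:
    ∃ π : Option (V × Bool) → Option (V × Bool),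
      IsCofib (G.Cone) {w : Option (V × Bool) | ∃ x : V, w = some (x, false)} π := by
  refine ⟨fun x y => DGraph.Cone.adj_false_false.symm, Option.map fun p => (p.1, false), ?_, ?_⟩
  · rintro u _ hu ⟨y, rfl⟩ e
    exact hu (DGraph.Cone.exists_eq_of_adj_false e)
  · rintro w ⟨_, ⟨z, rfl⟩, hr⟩
    obtain ⟨⟨y, b⟩, rfl⟩ := DGraph.Cone.exists_eq_of_reaches hr
    refine ⟨⟨y, rfl⟩, ?_⟩
    rintro _ ⟨v, rfl⟩
    exact DGraph.Cone.edist_eq_edist_false_add v y b
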